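/- Let R and S be TRSs over a ranked alphabet Σ, let m ≥ 0 be such that all variables occurring in the rules of S lie in X_m, let Z = {z₁,…,z_m} be fresh constants with Z ∩ Σ = ∅, and for t ∈ T_Σ(X_m) let t_z ∈ T_{Σ∪Z} be obtained by replacing each xᵢ by zᵢ. Then →*_S ⊆ →*_R (as relations on T_Σ(X)) if and only if for every rule l → r in S, r_z ∈ R*_{Σ∪Z}({l_z}). -/

import Mathlib

set_option autoImplicit false

/-!
Basic framework: ranked alphabets, terms, term rewrite systems,
bottom-up tree automata, recognizability.
A ranked alphabet is modelled by a (finite) type `σ` together with an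
arity function `ar : σ → ℕ`.  `Tm.var n` denotes the variable `x_{n+1}`,
so `T_Σ(X_m)` corresponds to terms all of whose variables satisfy `n < m`,
and ground terms (`T_Σ`) are terms satisfying `Tm.Ground`.
-/

/-- Terms over the ranked alphabet `(σ, ar)` with variables `x₁, x₂, …`
(`var n` is `x_{n+1}`). -/
inductive Tm (σ : Type) (ar : σ → ℕ) : Type
  | var : ℕ → Tm σ ar
  | app : (f : σ) → (Fin (ar f) → Tm σ ar) → Tm σ ar

namespace Tm

variable {σ γ : Type} {ar : σ → ℕ} {arγ : γ → ℕ}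

/-- Application of a substitution `θ` (assigning a term to each variable). -/
def subst (θ : ℕ → Tm σ ar) : Tm σ ar → Tm σ ar
  | var n => θ n
  | app f ts => app f fun i => (ts i).subst θ

/-- A term is ground if it contains no variables. -/
def Ground : Tm σ ar → Prop
  | var _ => False
  | app _ ts => ∀ i, (ts i).Ground

/-- The set of (indices of) variables occurring in a term. -/
def vars : Tm σ ar → Set ℕ
  | var n => {n}
  | app _ ts => ⋃ i, (ts i).vars

/-- Number of occurrences of the variable `x_{n+1}` in a term. -/
def count (n : ℕ) : Tm σ ar → ℕ
  | var m => if m = n then 1 else 0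
  | app _ ts => ∑ i, (ts i).count n

/-- A term is linear if every variable occurs at most once in it. -/
def Linear (t : Tm σ ar) : Prop := ∀ n, t.count n ≤ 1

/-- The symbol `s` occurs in the term. -/
def symOccurs (s : σ) : Tm σ ar → Prop
  | var _ => False
  | app f ts => f = s ∨ ∃ i, (ts i).symOccurs s

/-- Height of a term (constants and variables have height 0). -/
def height : Tm σ ar → ℕ
  | var _ => 0
  | app _ ts => Finset.univ.sup fun i => (ts i).height + 1

/-- Renaming of the alphabet along an arity-preserving map. -/
def map (ι : σ → γ) (h : ∀ s, arγ (ι s) = ar s) : Tm σ ar → Tm γ arγ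
  | var n => var n
  | app f ts => app (ι f) fun i => (ts (Fin.cast (h f) i)).map ι h

/-- The subterm of `t` at a position (a list of argument indices), if defined. -/
def subAt : Tm σ ar → List ℕ → Option (Tm σ ar)
  | t, [] => some t
  | var _, _ :: _ => none
  | app f ts, i :: p => if h : i < ar f then (ts ⟨i, h⟩).subAt p else none

/-- Subterm relation. -/
inductive Subtm : Tm σ ar → Tm σ ar → Prop
  | refl (t : Tm σ ar) : Subtm t t
  | app {s : Tm σ ar} {f : σ} {ts : Fin (ar f) → Tm σ ar} (i : Fin (ar f)) :
      Subtm s (ts i) → Subtm s (Tm.app f ts)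

end Tm

section Rewriting

variable {σ γ : Type} {ar : σ → ℕ} {arγ : γ → ℕ}

/-- One-step rewriting by the rule set `R`: apply a rule under a substitution
at the root, or rewrite inside one argument. -/
inductive Step (R : Set (Tm σ ar × Tm σ ar)) : Tm σ ar → Tm σ ar → Prop
  | rule {l r : Tm σ ar} (θ : ℕ → Tm σ ar) (h : (l, r) ∈ R) :
      Step R (l.subst θ) (r.subst θ)
  | congr {f : σ} {ts : Fin (ar f) → Tm σ ar} {t' : Tm σ ar} (i : Fin (ar f)) :
      Step R (ts i) t' → Step R (Tm.app f ts) (Tm.app f (Function.update ts i t'))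

/-- Many-step rewriting: reflexive-transitive closure of `Step`. -/
def Steps (R : Set (Tm σ ar × Tm σ ar)) : Tm σ ar → Tm σ ar → Prop :=
  Relation.ReflTransGen (Step R)

/-- `R` is a term rewrite system: finitely many rules, and every variable of a
right-hand side occurs in the corresponding left-hand side. -/
def IsTRS (R : Set (Tm σ ar × Tm σ ar)) : Prop :=
  R.Finite ∧ ∀ lr ∈ R, lr.2.vars ⊆ lr.1.vars

/-- The set `R*(L)` of descendants of members of `L`. -/
def Desc (R : Set (Tm σ ar × Tm σ ar)) (L : Set (Tm σ ar)) : Set (Tm σ ar) :=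
  {p | ∃ q ∈ L, Steps R q p}

/-- `R` is terminating: there is no infinite reduction sequence. -/
def Terminating (R : Set (Tm σ ar × Tm σ ar)) : Prop :=
  ¬ ∃ f : ℕ → Tm σ ar, ∀ n, Step R (f n) (f (n + 1))

/-- `R` is confluent. -/
def Confluent (R : Set (Tm σ ar × Tm σ ar)) : Prop :=
  ∀ a b c, Steps R a b → Steps R a c → ∃ d, Steps R b d ∧ Steps R c d

/-- `u` is an `R`-normal form of `t`. -/
def NormalFormOf (R : Set (Tm σ ar × Tm σ ar)) (t u : Tm σ ar) : Prop :=
  Steps R t u ∧ ¬ ∃ v, Step R u v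

/-- The term is a variable. -/
def IsVarTm (t : Tm σ ar) : Prop := ∃ n, t = Tm.var n

/-- Every left-hand side is linear. -/
def LeftLinearTRS (R : Set (Tm σ ar × Tm σ ar)) : Prop :=
  ∀ lr ∈ R, lr.1.Linear

/-- All left- and right-hand sides are linear. -/
def LinearTRS (R : Set (Tm σ ar × Tm σ ar)) : Prop :=
  ∀ lr ∈ R, lr.1.Linear ∧ lr.2.Linear

/-- No rule has a variable as left-hand side or as right-hand side. -/
def CollapseFree (R : Set (Tm σ ar × Tm σ ar)) : Prop :=
  ∀ lr ∈ R, ¬ IsVarTm lr.1 ∧ ¬ IsVarTm lr.2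

/-- Transport of a rule set along an arity-preserving renaming of the alphabet. -/
def mapRules (ι : σ → γ) (h : ∀ s, arγ (ι s) = ar s) (R : Set (Tm σ ar × Tm σ ar)) :
    Set (Tm γ arγ × Tm γ arγ) :=
  (fun lr => (lr.1.map ι h, lr.2.map ι h)) '' R

end Rewriting

/-- A bottom-up tree automaton over `(σ, ar)` with state type `Q`:
transition rules `δ(q₁,…,qₙ) → q`, λ-rules `q → q'`, and final states. -/
structure BTA (σ : Type) (ar : σ → ℕ) (Q : Type) where
  trans : ∀ f : σ, (Fin (ar f) → Q) → Q → Prop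
  eps : Q → Q → Prop
  final : Q → Prop

namespace BTA

variable {σ : Type} {ar : σ → ℕ} {Q : Type}

/-- `t →* q`: the (ground) term `t` can be rewritten to the state `q`. -/
inductive Reach (A : BTA σ ar Q) : Tm σ ar → Q → Prop
  | app {f : σ} {ts : Fin (ar f) → Tm σ ar} {qs : Fin (ar f) → Q} {q : Q} :
      (∀ i, Reach A (ts i) (qs i)) → A.trans f qs q → Reach A (Tm.app f ts) q
  | eps {t : Tm σ ar} {q q' : Q} : Reach A t q → A.eps q q' → Reach A t q'

/-- The tree language recognized by the automaton. -/
def Lang (A : BTA σ ar Q) : Set (Tm σ ar) := {t | ∃ q, A.final q ∧ A.Reach t q}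

end BTA

/-- A tree language is recognizable if some bottom-up tree automaton with a
finite state set recognizes it. -/
def Recognizable {σ : Type} {ar : σ → ℕ} (L : Set (Tm σ ar)) : Prop :=
  ∃ (Q : Type) (_ : Finite Q) (A : BTA σ ar Q), A.Lang = L

/-- `R` (a TRS over all of `σ`, thought of as `sign(R)`) preserves
recognizability of finite tree languages: for every ranked alphabet extending
`σ` (i.e. every finite type with an arity-preserving injection from `σ`) and
every finite tree language of ground terms, the descendant set is recognizable. -/
def PRF {σ : Type} {ar : σ → ℕ} (R : Set (Tm σ ar × Tm σ ar)) : Prop :=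
  ∀ (γ : Type) (arγ : γ → ℕ), Finite γ →
    ∀ ι : σ → γ, Function.Injective ι →
      ∀ h : ∀ s, arγ (ι s) = ar s,
        ∀ L : Set (Tm γ arγ), L.Finite → (∀ t ∈ L, t.Ground) →
          Recognizable (Desc (mapRules ι h R) L)

/-- `R` preserves recognizability: as `PRF`, but for arbitrary recognizable
tree languages. -/
def PR {σ : Type} {ar : σ → ℕ} (R : Set (Tm σ ar × Tm σ ar)) : Prop :=
  ∀ (γ : Type) (arγ : γ → ℕ), Finite γ →
    ∀ ι : σ → γ, Function.Injective ι →
      ∀ h : ∀ s, arγ (ι s) = ar s,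
        ∀ L : Set (Tm γ arγ), Recognizable L →
          Recognizable (Desc (mapRules ι h R) L)

/-! ### Fresh constants `z₁,…,z_m` (used in Statements 11–13): the alphabet
`σ ⊕ Fin m`, where `Sum.inr i` is the fresh constant `z_{i+1}`. -/

/-- Arity function of `Σ ∪ Z`. -/
def arZ {σ : Type} (ar : σ → ℕ) (m : ℕ) : σ ⊕ Fin m → ℕ :=
  Sum.elim ar fun _ => 0

/-- `t_z`: replace every occurrence of the variable `xᵢ` (`1 ≤ i ≤ m`,
i.e. `Tm.var n` with `n < m`) by the constant `zᵢ`. -/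
def tmToZ {σ : Type} {ar : σ → ℕ} (m : ℕ) : Tm σ ar → Tm (σ ⊕ Fin m) (arZ ar m)
  | .var n => if h : n < m then .app (Sum.inr ⟨n, h⟩) ![] else .var n
  | .app f ts => .app (Sum.inl f) fun i => tmToZ m (ts i)

/-!
An `R`-derivation `l_z →* r_z` over `Σ ∪ Z` can be read back in `T_Σ(X)` under any
substitution `θ`, interpreting `zᵢ` as `θ xᵢ`: this gives `lθ →*_R rθ`, and closure of `→*_R`
under contexts turns these instances of the rules of `S` into `→*_S ⊆ →*_R`. Conversely, replacing
variables by fresh constants commutes with rewriting, so `l →_S r` yields `l_z →*_R r_z`.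
-/

@[simp]
lemma Tm.subst_var {σ : Type} {ar : σ → ℕ} (t : Tm σ ar) : t.subst Tm.var = t := by
  induction t with
  | var n => rfl
  | app f ts ih => simp only [Tm.subst, ih]

section Rewriting

variable {σ : Type} {ar : σ → ℕ} {R S : Set (Tm σ ar × Tm σ ar)}

lemma Step.of_mem {l r : Tm σ ar} (h : (l, r) ∈ R) : Step R l r := by
  simpa using Step.rule (R := R) Tm.var h

lemma Step.congr_comp {α : Type} {f : σ} {ts : Fin (ar f) → α} (g : α → Tm σ ar) (i : Fin (ar f))
    {t' : α} (h : Step R (g (ts i)) (g t')) :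
    Step R (Tm.app f (g ∘ ts)) (Tm.app f (g ∘ Function.update ts i t')) := by
  rw [Function.comp_update]
  exact .congr i h

lemma Steps.app_update {f : σ} {ts : Fin (ar f) → Tm σ ar} (i : Fin (ar f)) {a b : Tm σ ar}
    (h : Steps R a b) :
    Steps R (Tm.app f (Function.update ts i a)) (Tm.app f (Function.update ts i b)) := by
  induction h with
  | refl => exact .refl
  | @tail b c _ hbc ih =>
    refine ih.tail ?_
    have := Step.congr (ts := Function.update ts i b) i (by rwa [Function.update_self])
    rwa [Function.update_idem] at this

lemma Steps.app_of_arg {f : σ} {ts : Fin (ar f) → Tm σ ar} (i : Fin (ar f)) {t' : Tm σ ar}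
    (h : Steps R (ts i) t') : Steps R (Tm.app f ts) (Tm.app f (Function.update ts i t')) := by
  simpa using Steps.app_update (ts := ts) i h

lemma Steps.of_forall_subst (hS : ∀ lr ∈ S, ∀ θ, Steps R (lr.1.subst θ) (lr.2.subst θ))
    {u v : Tm σ ar} (h : Steps S u v) : Steps R u v := by
  refine Relation.ReflTransGen.lift' id (fun a b hab => ?_) _ _ h
  induction hab with
  | rule θ hlr => exact hS _ hlr θ
  | congr i _ ih => exact Steps.app_of_arg i ih

end Rewriting

section FreshConstants

variable {σ : Type} {ar : σ → ℕ} {m : ℕ}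

/-- Read a term over `Σ ∪ Z` in `T_Σ(X)`, interpreting both `zᵢ` and `xᵢ` as `θ i`. -/
def evalZ (θ : ℕ → Tm σ ar) : Tm (σ ⊕ Fin m) (arZ ar m) → Tm σ ar
  | .var n => θ n
  | .app (Sum.inl f) ts => .app f fun i => evalZ θ (ts i)
  | .app (Sum.inr i) _ => θ i

lemma evalZ_tmToZ (θ : ℕ → Tm σ ar) (t : Tm σ ar) : evalZ θ (tmToZ m t) = t.subst θ := by
  induction t with
  | var n =>
    simp only [tmToZ, Tm.subst]
    split <;> rfl
  | app f ts ih => simp only [tmToZ, Tm.subst, evalZ, ih]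

lemma tmToZ_subst (θ : ℕ → Tm σ ar) (t : Tm σ ar) :
    tmToZ m (t.subst θ) = (t.map Sum.inl fun _ => rfl).subst fun n => tmToZ m (θ n) := by
  induction t with
  | var n => rfl
  | app f ts ih =>
    simp only [Tm.subst, tmToZ, Tm.map]
    exact congrArg _ (funext fun i => ih i)

lemma evalZ_map_subst (θ : ℕ → Tm σ ar) (τ : ℕ → Tm (σ ⊕ Fin m) (arZ ar m)) (t : Tm σ ar) :
    evalZ θ ((t.map Sum.inl fun _ => rfl).subst τ) = t.subst fun n => evalZ θ (τ n) := by
  induction t with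
  | var n => rfl
  | app f ts ih =>
    simp only [Tm.map, Tm.subst, evalZ]
    exact congrArg _ (funext fun i => ih i)

lemma tmToZ_step (R : Set (Tm σ ar × Tm σ ar)) {u v : Tm σ ar} (h : Step R u v) :
    Step (mapRules Sum.inl (fun _ => rfl) R) (tmToZ m u) (tmToZ m v) := by
  induction h with
  | @rule l r θ hlr =>
    rw [tmToZ_subst, tmToZ_subst]
    exact .rule _ ⟨(l, r), hlr, rfl⟩
  | @congr f ts t' i _ ih =>
    exact Step.congr_comp (f := Sum.inl f) (tmToZ m) i ih

lemma tmToZ_steps (R : Set (Tm σ ar × Tm σ ar)) {u v : Tm σ ar} (h : Steps R u v) :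
    Steps (mapRules Sum.inl (fun _ => rfl) R) (tmToZ m u) (tmToZ m v) :=
  Relation.ReflTransGen.lift (tmToZ m) (fun _ _ => tmToZ_step R) _ _ h

lemma evalZ_step (R : Set (Tm σ ar × Tm σ ar)) (θ : ℕ → Tm σ ar)
    {p q : Tm (σ ⊕ Fin m) (arZ ar m)} (h : Step (mapRules Sum.inl (fun _ => rfl) R) p q) :
    Step R (evalZ θ p) (evalZ θ q) := by
  induction h with
  | rule τ hlr =>
    obtain ⟨⟨l, r⟩, hlr, heq⟩ := hlr
    cases heq
    erw [evalZ_map_subst, evalZ_map_subst]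
    exact .rule _ hlr
  | @congr f ts t' i _ ih =>
    match f, ts, i with
    | Sum.inr _, _, i => exact i.elim0
    | Sum.inl f, ts, i =>
      exact Step.congr_comp (evalZ θ) i ih

lemma evalZ_steps (R : Set (Tm σ ar × Tm σ ar)) (θ : ℕ → Tm σ ar)
    {p q : Tm (σ ⊕ Fin m) (arZ ar m)} (h : Steps (mapRules Sum.inl (fun _ => rfl) R) p q) :
    Steps R (evalZ θ p) (evalZ θ q) :=
  Relation.ReflTransGen.lift (evalZ θ) (fun _ _ => evalZ_step R θ) _ _ h

end FreshConstants

theorem stmt_13_general {σ : Type} {ar : σ → ℕ}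
    (R S : Set (Tm σ ar × Tm σ ar)) (m : ℕ) :
    (∀ u v : Tm σ ar, Steps S u v → Steps R u v) ↔
      ∀ lr ∈ S, tmToZ m lr.2 ∈ Desc (mapRules Sum.inl (fun _ => rfl) R) {tmToZ m lr.1} := by
  constructor
  · intro h lr hlr
    exact ⟨_, rfl, tmToZ_steps R (h _ _ (.single (Step.of_mem hlr)))⟩
  · intro h u v
    refine Steps.of_forall_subst fun lr hlr θ => ?_
    obtain ⟨_, rfl, hsteps⟩ := h lr hlr
    simpa only [evalZ_tmToZ] using evalZ_steps R θ hsteps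

theorem stmt_13 {σ : Type} {ar : σ → ℕ} [Finite σ]
    (R S : Set (Tm σ ar × Tm σ ar)) (hR : IsTRS R) (hS : IsTRS S) (m : ℕ)
    -- all variables occurring in the rules of `S` lie in `X_m`
    (hm : ∀ lr ∈ S, lr.1.vars ⊆ {n | n < m} ∧ lr.2.vars ⊆ {n | n < m}) :
    (∀ u v : Tm σ ar, Steps S u v → Steps R u v) ↔
      ∀ lr ∈ S, tmToZ m lr.2 ∈ Desc (mapRules Sum.inl (fun _ => rfl) R) {tmToZ m lr.1} :=
  stmt_13_general R S m
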